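/- arXiv:1802.03031 — 2 statements merged into one kernel-verified Lean document; each statement's English description precedes it below -/
import Mathlib

section
/- Let M be a fuzzy metric on X. If for all x,y the limit of Δ_{M,λ}(x,y) as λ → 1⁻ exists and equals some t₀, then M satisfies the finite distance condition; indeed M(x,y,t₀+1) = 1. -/
open Filter Set Topology

structure IsFuzzyMetric {X : Type*} (M : X → X → ℝ → ℝ) : Prop where
  mem_Icc : ∀ x y t, M x y t ∈ Set.Icc (0:ℝ) 1
  km1 : ∀ x y : X, ∀ t : ℝ, t ≤ 0 → M x y t = 0
  km2 : ∀ x y : X, (∀ t : ℝ, 0 < t → M x y t = 1) ↔ x = y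
  km3 : ∀ x y t, M x y t = M y x t
  km4 : ∀ x y z : X, ∀ t s : ℝ, min (M x y t) (M y z s) ≤ M x z (t + s)
  km5_left_cont : ∀ x y : X, x ≠ y → ∀ t : ℝ,
    Filter.Tendsto (M x y) (nhdsWithin t (Set.Iio t)) (nhds (M x y t))
  km5_lim : ∀ x y : X, x ≠ y → Filter.Tendsto (M x y) Filter.atTop (nhds 1)
  sdp : ∀ x y : X, x ≠ y →
    Filter.Tendsto (M x y) (nhdsWithin 0 (Set.Ioi 0)) (nhds 0)

noncomputable def Delta {X : Type*} (M : X → X → ℝ → ℝ) (lam : ℝ) (x y : X) : ℝ :=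
  sInf {t : ℝ | lam < M x y t}

noncomputable def delta {X : Type*} (M : X → X → ℝ → ℝ) (lam : ℝ) (x y : X) : ℝ :=
  sSup {t : ℝ | M x y t < lam}

/-! Since `M x y` is non-decreasing, `M x y s < 1` would force `Δ_λ(x,y) ≥ s` for every
`λ ∈ (M x y s, 1)`, so the limit of `Δ_λ(x,y)` as `λ → 1⁻` is at least `s`. Hence
`M x y s = 1` for every `s` beyond that limit. -/

namespace IsFuzzyMetric

variable {X : Type*} {M : X → X → ℝ → ℝ}

theorem monotone (hM : IsFuzzyMetric M) (x y : X) : Monotone (M x y) := by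
  intro t s hts
  rcases hts.eq_or_lt with rfl | hlt
  · exact le_rfl
  have hyy : M y y (s - t) = 1 := (hM.km2 y y).mpr rfl (s - t) (sub_pos.mpr hlt)
  calc M x y t = min (M x y t) (M y y (s - t)) := by
          rw [hyy, min_eq_left (hM.mem_Icc x y t).2]
    _ ≤ M x y (t + (s - t)) := hM.km4 x y y t (s - t)
    _ = M x y s := by rw [add_sub_cancel]

theorem exists_lt_apply (hM : IsFuzzyMetric M) (x y : X) {lam : ℝ} (hlam : lam < 1) :
    ∃ t, lam < M x y t := by
  by_cases hxy : x = y
  · subst hxy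
    exact ⟨1, by rwa [(hM.km2 x x).mpr rfl 1 one_pos]⟩
  · exact ((hM.km5_lim x y hxy).eventually (eventually_gt_nhds hlam)).exists

theorem le_Delta (hM : IsFuzzyMetric M) {x y : X} {lam s : ℝ} (hlam : lam < 1)
    (hs : M x y s ≤ lam) : s ≤ Delta M lam x y := by
  refine le_csInf (hM.exists_lt_apply x y hlam) fun t ht => ?_
  by_contra! hts
  exact (hs.trans_lt ht).not_ge (hM.monotone x y hts.le)

theorem eq_one_of_tendsto_Delta (hM : IsFuzzyMetric M) {x y : X} {t₀ s : ℝ}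
    (hlim : Tendsto (fun lam => Delta M lam x y) (𝓝[<] 1) (𝓝 t₀)) (hs : t₀ < s) :
    M x y s = 1 := by
  by_contra hne
  have hlt : M x y s < 1 := (hM.mem_Icc x y s).2.lt_of_ne hne
  have hev : ∀ᶠ lam in 𝓝[<] (1 : ℝ), s ≤ Delta M lam x y := by
    filter_upwards [Ioo_mem_nhdsLT hlt] with lam hlam
    exact hM.le_Delta hlam.2 hlam.1.le
  exact (ge_of_tendsto hlim hev).not_gt hs

end IsFuzzyMetric

theorem Delta_limit_implies_fd {X : Type*} (M : X → X → ℝ → ℝ)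
    (hM : IsFuzzyMetric M) :
    ∀ x y : X, ∀ t₀ : ℝ,
      Filter.Tendsto (fun lam => Delta M lam x y)
        (nhdsWithin (1:ℝ) (Set.Iio 1)) (nhds t₀) →
      M x y (t₀ + 1) = 1 :=
  fun _ _ _ hlim => hM.eq_one_of_tendsto_Delta hlim (lt_add_one _)
end

section
/- Let M be a fuzzy metric on X satisfying the finite distance condition. Then d_M(x,y) := sup_{λ∈(0,1)} Δ_{M,λ}(x,y) defines a metric on X. -/
open Filter Set Topology

noncomputable def dM {X : Type*} (M : X → X → ℝ → ℝ) (x y : X) : ℝ :=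
  sSup ((fun lam => Delta M lam x y) '' Set.Ioo (0:ℝ) 1)

/-! For each `λ ∈ (0,1)`, `Δ_λ` is already a pseudometric. Its triangle inequality is KM4:
if `M(x,y,t) > λ` and `M(y,z,s) > λ` then `M(x,z,t+s) > λ`, so the level sets add up. The finite
distance condition bounds every `Δ_λ(x,y)` by a `t₀` with `M(x,y,t₀) = 1`, so the supremum `d_M`
is finite and inherits these properties. Separation comes from SDP: for `x ≠ y`, `M(x,y,·) < 1/2`
on some interval `(0,u)`, whence `d_M(x,y) ≥ Δ_{1/2}(x,y) ≥ u > 0`. -/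

lemma nonempty_setOf_lt_apply {X : Type*} {M : X → X → ℝ → ℝ}
    (hFD : ∀ x y : X, ∃ t : ℝ, M x y t = 1) (x y : X) {lam : ℝ} (hlam : lam < 1) :
    {t | lam < M x y t}.Nonempty :=
  let ⟨t, ht⟩ := hFD x y
  ⟨t, show lam < M x y t from ht ▸ hlam⟩

namespace IsFuzzyMetric

variable {X : Type*} {M : X → X → ℝ → ℝ}

lemma pos_of_lt_apply (hM : IsFuzzyMetric M) {x y : X} {lam t : ℝ} (hlam : 0 ≤ lam)
    (ht : lam < M x y t) : 0 < t := by
  by_contra! h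
  rw [hM.km1 x y t h] at ht
  exact ht.not_ge hlam

lemma bddBelow_setOf_lt_apply (hM : IsFuzzyMetric M) (x y : X) {lam : ℝ} (hlam : 0 ≤ lam) :
    BddBelow {t | lam < M x y t} :=
  ⟨0, fun _ ht => (hM.pos_of_lt_apply hlam ht).le⟩

lemma Delta_nonneg (hM : IsFuzzyMetric M) (x y : X) {lam : ℝ} (hlam : 0 ≤ lam) :
    0 ≤ Delta M lam x y :=
  Real.sInf_nonneg fun _ ht => (hM.pos_of_lt_apply hlam ht).le

lemma Delta_le_of_lt_apply (hM : IsFuzzyMetric M) {x y : X} {lam t : ℝ} (hlam : 0 ≤ lam)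
    (ht : lam < M x y t) : Delta M lam x y ≤ t :=
  csInf_le (hM.bddBelow_setOf_lt_apply x y hlam) ht

lemma Delta_self (hM : IsFuzzyMetric M) (x : X) {lam : ℝ} (hlam : lam ∈ Ioo (0 : ℝ) 1) :
    Delta M lam x x = 0 := by
  have hset : {t | lam < M x x t} = Ioi 0 := by
    ext t
    refine ⟨hM.pos_of_lt_apply hlam.1.le, fun ht => ?_⟩
    show lam < M x x t
    rw [(hM.km2 x x).mpr rfl t ht]
    exact hlam.2
  rw [Delta, hset, csInf_Ioi]

lemma Delta_comm (hM : IsFuzzyMetric M) (lam : ℝ) (x y : X) :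
    Delta M lam x y = Delta M lam y x := by
  simp only [Delta, hM.km3 x y]

open scoped Pointwise in
lemma Delta_le_add (hM : IsFuzzyMetric M) (hFD : ∀ x y : X, ∃ t : ℝ, M x y t = 1)
    (x y z : X) {lam : ℝ} (hlam : lam ∈ Ioo (0 : ℝ) 1) :
    Delta M lam x z ≤ Delta M lam x y + Delta M lam y z := by
  have hne : ∀ a b : X, {t | lam < M a b t}.Nonempty := fun a b =>
    nonempty_setOf_lt_apply hFD a b hlam.2
  have hadd : {t | lam < M x y t} + {t | lam < M y z t} ⊆ {t | lam < M x z t} := by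
    rintro _ ⟨t, ht, s, hs, rfl⟩
    exact (lt_min ht hs).trans_le (hM.km4 x y z t s)
  rw [Delta, Delta, Delta, ← csInf_add (hne x y) (hM.bddBelow_setOf_lt_apply x y hlam.1.le)
    (hne y z) (hM.bddBelow_setOf_lt_apply y z hlam.1.le)]
  exact csInf_le_csInf (hM.bddBelow_setOf_lt_apply x z hlam.1.le) ((hne x y).add (hne y z)) hadd

lemma Delta_pos (hM : IsFuzzyMetric M) (hFD : ∀ x y : X, ∃ t : ℝ, M x y t = 1)
    {x y : X} (hxy : x ≠ y) {lam : ℝ} (hlam : lam ∈ Ioo (0 : ℝ) 1) :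
    0 < Delta M lam x y := by
  obtain ⟨u, hu, hsmall⟩ := mem_nhdsGT_iff_exists_Ioo_subset.mp
    ((hM.sdp x y hxy).eventually_lt_const hlam.1)
  refine hu.trans_le (le_csInf (nonempty_setOf_lt_apply hFD x y hlam.2) fun t ht => ?_)
  by_contra! htu
  have hsmall_t : M x y t < lam := hsmall ⟨hM.pos_of_lt_apply hlam.1.le ht, htu⟩
  exact lt_asymm hsmall_t ht

lemma bddAbove_Delta_image (hM : IsFuzzyMetric M) (hFD : ∀ x y : X, ∃ t : ℝ, M x y t = 1)
    (x y : X) : BddAbove ((fun lam => Delta M lam x y) '' Ioo (0 : ℝ) 1) := by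
  obtain ⟨t₀, ht₀⟩ := hFD x y
  refine ⟨t₀, ?_⟩
  rintro _ ⟨lam, hlam, rfl⟩
  exact hM.Delta_le_of_lt_apply hlam.1.le (ht₀ ▸ hlam.2)

lemma Delta_le_dM (hM : IsFuzzyMetric M) (hFD : ∀ x y : X, ∃ t : ℝ, M x y t = 1)
    (x y : X) {lam : ℝ} (hlam : lam ∈ Ioo (0 : ℝ) 1) : Delta M lam x y ≤ dM M x y :=
  le_csSup (hM.bddAbove_Delta_image hFD x y) ⟨lam, hlam, rfl⟩

lemma dM_nonneg (hM : IsFuzzyMetric M) (x y : X) : 0 ≤ dM M x y :=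
  Real.sSup_nonneg <| forall_mem_image.mpr fun _ hlam => hM.Delta_nonneg x y hlam.1.le

lemma dM_self (hM : IsFuzzyMetric M) (x : X) : dM M x x = 0 :=
  le_antisymm
    (csSup_le ((nonempty_Ioo.mpr zero_lt_one).image _)
      (forall_mem_image.mpr fun _ hlam => (hM.Delta_self x hlam).le))
    (hM.dM_nonneg x x)

lemma dM_comm (hM : IsFuzzyMetric M) (x y : X) : dM M x y = dM M y x := by
  simp only [dM, hM.Delta_comm _ x y]

lemma dM_triangle (hM : IsFuzzyMetric M) (hFD : ∀ x y : X, ∃ t : ℝ, M x y t = 1)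
    (x y z : X) : dM M x z ≤ dM M x y + dM M y z :=
  csSup_le ((nonempty_Ioo.mpr zero_lt_one).image _) <| forall_mem_image.mpr fun _ hlam =>
    (hM.Delta_le_add hFD x y z hlam).trans
      (add_le_add (hM.Delta_le_dM hFD x y hlam) (hM.Delta_le_dM hFD y z hlam))

lemma eq_of_dM_eq_zero (hM : IsFuzzyMetric M) (hFD : ∀ x y : X, ∃ t : ℝ, M x y t = 1)
    {x y : X} (h : dM M x y = 0) : x = y := by
  by_contra hxy
  have hhalf : (1 / 2 : ℝ) ∈ Ioo (0 : ℝ) 1 := by norm_num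
  exact (hM.Delta_pos hFD hxy hhalf).not_ge (h ▸ hM.Delta_le_dM hFD x y hhalf)

end IsFuzzyMetric

theorem dM_isMetric {X : Type*} (M : X → X → ℝ → ℝ) (hM : IsFuzzyMetric M)
    (hFD : ∀ x y : X, ∃ t : ℝ, M x y t = 1) :
    (∀ x y : X, 0 ≤ dM M x y) ∧
    (∀ x y : X, dM M x y = 0 ↔ x = y) ∧
    (∀ x y : X, dM M x y = dM M y x) ∧
    (∀ x y z : X, dM M x z ≤ dM M x y + dM M y z) :=
  ⟨hM.dM_nonneg, fun _ _ => ⟨hM.eq_of_dM_eq_zero hFD, fun h => h ▸ hM.dM_self _⟩,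
    hM.dM_comm, hM.dM_triangle hFD⟩
end
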